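/- Uplink-to-downlink inclusion: for every network decoding order π, every nonpositive power allocation r̄, and every tuple d̄ ∈ P^IMAC_π(r̄), there exist a network decoding order π̃ and a nonpositive power allocation r̃ such that d̄ ∈ P^IBC_π̃(r̃); consequently P^IMAC⋆ ⊆ P^IBC⋆. -/
import Mathlib


open Finset

/-- Positive part: `(x)⁺ = max {x, 0}`. -/
noncomputable def pplus (x : ℝ) : ℝ := max x 0

/-- Maximum over all pairs `(l, j)` with `j ≠ k` of `f j l`. -/
noncomputable def crossMax {K : ℕ} (hK : 2 ≤ K) (k : Fin K)
    (f : Fin K → Fin 2 → ℝ) : ℝ :=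
  (Finset.univ.filter (fun p : Fin K × Fin 2 => p.1 ≠ k)).sup'
    (by
      haveI : Nontrivial (Fin K) := Fin.nontrivial_iff_two_le.mpr hK
      obtain ⟨j, hj⟩ := exists_ne k
      exact ⟨(j, (0 : Fin 2)), by simp [hj]⟩)
    (fun p => f p.1 p.2)

/-- Minimum over all pairs `(l, j)` with `j ≠ k` of `f j l`. -/
noncomputable def crossMin {K : ℕ} (hK : 2 ≤ K) (k : Fin K)
    (f : Fin K → Fin 2 → ℝ) : ℝ :=
  (Finset.univ.filter (fun p : Fin K × Fin 2 => p.1 ≠ k)).inf'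
    (by
      haveI : Nontrivial (Fin K) := Fin.nontrivial_iff_two_le.mpr hK
      obtain ⟨j, hj⟩ := exists_ne k
      exact ⟨(j, (0 : Fin 2)), by simp [hj]⟩)
    (fun p => f p.1 p.2)

/-- Maximum over all cells `j ≠ i` of `f j`. -/
noncomputable def cellMax {K : ℕ} (hK : 2 ≤ K) (i : Fin K)
    (f : Fin K → ℝ) : ℝ :=
  (Finset.univ.filter (fun j : Fin K => j ≠ i)).sup'
    (by
      haveI : Nontrivial (Fin K) := Fin.nontrivial_iff_two_le.mpr hK
      obtain ⟨j, hj⟩ := exists_ne i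
      exact ⟨j, by simp [hj]⟩)
    f

/-- IBC TIN upper bound on the GDoF of the first-decoded user of cell `k`.
Users are indexed by `Fin 2` (user `0` is UE 1, user `1` is UE 2);
`π k 0` and `π k 1` are the first and second decoded users of cell `k`. -/
noncomputable def ibcBound1 {K : ℕ} (hK : 2 ≤ K) (α : Fin K → Fin K → Fin 2 → ℝ)
    (π : Fin K → Equiv.Perm (Fin 2)) (r : Fin K → Fin 2 → ℝ) (k : Fin K) : ℝ :=
  max 0 (min
    (α k k (π k 0) + r k (π k 0) -
      pplus (max (α k k (π k 0) + r k (π k 1))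
        (crossMax hK k (fun j l => α k j (π k 0) + r j l))))
    (α k k (π k 1) + r k (π k 0) -
      pplus (max (α k k (π k 1) + r k (π k 1))
        (crossMax hK k (fun j l => α k j (π k 1) + r j l)))))

/-- IBC TIN upper bound on the GDoF of the second-decoded user of cell `k`. -/
noncomputable def ibcBound2 {K : ℕ} (hK : 2 ≤ K) (α : Fin K → Fin K → Fin 2 → ℝ)
    (π : Fin K → Equiv.Perm (Fin 2)) (r : Fin K → Fin 2 → ℝ) (k : Fin K) : ℝ :=
  max 0 (α k k (π k 1) + r k (π k 1) -
    pplus (crossMax hK k (fun j l => α k j (π k 1) + r j l)))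

/-- The IBC TIN region `P^IBC_π(r)`. -/
noncomputable def IBCr {K : ℕ} (hK : 2 ≤ K) (α : Fin K → Fin K → Fin 2 → ℝ)
    (π : Fin K → Equiv.Perm (Fin 2)) (r : Fin K → Fin 2 → ℝ) :
    Set (Fin K → Fin 2 → ℝ) :=
  {d | ∀ k : Fin K,
    (0 ≤ d k (π k 0) ∧ d k (π k 0) ≤ ibcBound1 hK α π r k) ∧
    (0 ≤ d k (π k 1) ∧ d k (π k 1) ≤ ibcBound2 hK α π r k)}

/-- The general TIN-achievable GDoF region of the IBC, `P^IBC⋆`. -/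
noncomputable def IBCstar {K : ℕ} (hK : 2 ≤ K) (α : Fin K → Fin K → Fin 2 → ℝ) :
    Set (Fin K → Fin 2 → ℝ) :=
  {d | ∃ π : Fin K → Equiv.Perm (Fin 2), ∃ r : Fin K → Fin 2 → ℝ,
    (∀ k l, r k l ≤ 0) ∧ d ∈ IBCr hK α π r}

/-- IMAC TIN upper bound on the GDoF of user `π k 0` (decoded last) of cell `k`. -/
noncomputable def imacBound1 {K : ℕ} (hK : 2 ≤ K) (α : Fin K → Fin K → Fin 2 → ℝ)
    (π : Fin K → Equiv.Perm (Fin 2)) (r : Fin K → Fin 2 → ℝ) (k : Fin K) : ℝ :=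
  max 0 (α k k (π k 0) + r k (π k 0) -
    pplus (crossMax hK k (fun j l => α j k l + r j l)))

/-- IMAC TIN upper bound on the GDoF of user `π k 1` of cell `k`. -/
noncomputable def imacBound2 {K : ℕ} (hK : 2 ≤ K) (α : Fin K → Fin K → Fin 2 → ℝ)
    (π : Fin K → Equiv.Perm (Fin 2)) (r : Fin K → Fin 2 → ℝ) (k : Fin K) : ℝ :=
  max 0 (α k k (π k 1) + r k (π k 1) -
    pplus (max (α k k (π k 0) + r k (π k 0))
      (crossMax hK k (fun j l => α j k l + r j l))))

/-- The IMAC TIN region `P^IMAC_π(r̄)`. -/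
noncomputable def IMACr {K : ℕ} (hK : 2 ≤ K) (α : Fin K → Fin K → Fin 2 → ℝ)
    (π : Fin K → Equiv.Perm (Fin 2)) (r : Fin K → Fin 2 → ℝ) :
    Set (Fin K → Fin 2 → ℝ) :=
  {d | ∀ k : Fin K,
    (0 ≤ d k (π k 0) ∧ d k (π k 0) ≤ imacBound1 hK α π r k) ∧
    (0 ≤ d k (π k 1) ∧ d k (π k 1) ≤ imacBound2 hK α π r k)}

/-- The general TIN-achievable GDoF region of the IMAC, `P^IMAC⋆`. -/
noncomputable def IMACstar {K : ℕ} (hK : 2 ≤ K) (α : Fin K → Fin K → Fin 2 → ℝ) :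
    Set (Fin K → Fin 2 → ℝ) :=
  {d | ∃ π : Fin K → Equiv.Perm (Fin 2), ∃ r : Fin K → Fin 2 → ℝ,
    (∀ k l, r k l ≤ 0) ∧ d ∈ IMACr hK α π r}

/-- `betaD hK α π r k l = β_k^{[π_k(l+1)]}`, indexed by decoding position `l : Fin 2`. -/
noncomputable def betaD {K : ℕ} (hK : 2 ≤ K) (α : Fin K → Fin K → Fin 2 → ℝ)
    (π : Fin K → Equiv.Perm (Fin 2)) (r : Fin K → Fin 2 → ℝ)
    (k : Fin K) (l : Fin 2) : ℝ :=
  if l = 0 then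
    min
      (min (min (α k k (π k 0)) (-(r k (π k 1))))
        (α k k (π k 0) - crossMax hK k (fun j l' => α k j (π k 0) + r j l')))
      (min (min (α k k (π k 1)) (-(r k (π k 1))))
        (α k k (π k 1) - crossMax hK k (fun j l' => α k j (π k 1) + r j l')))
  else
    min (α k k (π k 1))
      (α k k (π k 1) - crossMax hK k (fun j l' => α k j (π k 1) + r j l'))

/-- The dual uplink power allocation `r̄_k^{[π_k(l)]} = −α_{kk}^{[π_k(l)]} + β_k^{[π_k(l)]}`,
expressed as a function of the user index `u`. -/
noncomputable def rbarDual {K : ℕ} (hK : 2 ≤ K) (α : Fin K → Fin K → Fin 2 → ℝ)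
    (π : Fin K → Equiv.Perm (Fin 2)) (r : Fin K → Fin 2 → ℝ)
    (k : Fin K) (u : Fin 2) : ℝ :=
  -α k k u + betaD hK α π r k ((π k).symm u)

/-- `gammaD hK α π r k l = γ_k^{[π_k(l+1)]}`, indexed by decoding position `l : Fin 2`. -/
noncomputable def gammaD {K : ℕ} (hK : 2 ≤ K) (α : Fin K → Fin K → Fin 2 → ℝ)
    (π : Fin K → Equiv.Perm (Fin 2)) (r : Fin K → Fin 2 → ℝ)
    (k : Fin K) (l : Fin 2) : ℝ :=
  if l = 0 then
    max 0 (crossMax hK k (fun j l' => α j k l' + r j l'))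
  else
    max (max 0 (α k k (π k 0) + r k (π k 0)))
      (crossMax hK k (fun j l' => α j k l' + r j l'))

/-- `γ_j^{[u]}` indexed by the user index `u`. -/
noncomputable def gammaU {K : ℕ} (hK : 2 ≤ K) (α : Fin K → Fin K → Fin 2 → ℝ)
    (π : Fin K → Equiv.Perm (Fin 2)) (r : Fin K → Fin 2 → ℝ)
    (j : Fin K) (u : Fin 2) : ℝ :=
  gammaD hK α π r j ((π j).symm u)

section Aux

variable {K : ℕ}

lemma le_crossMax (hK : 2 ≤ K) {k j : Fin K} (f : Fin K → Fin 2 → ℝ) (l : Fin 2)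
    (hj : j ≠ k) : f j l ≤ crossMax hK k f :=
  Finset.le_sup' (f := fun p : Fin K × Fin 2 => f p.1 p.2)
    (b := (j, l)) (by simp [hj])

lemma crossMax_le (hK : 2 ≤ K) {k : Fin K} {f : Fin K → Fin 2 → ℝ} {c : ℝ}
    (h : ∀ j, j ≠ k → ∀ l, f j l ≤ c) : crossMax hK k f ≤ c :=
  Finset.sup'_le _ _ fun p hp => h p.1 (by simpa using hp) p.2

/-- UL cross interference level at base station `k`. -/
noncomputable def dX (hK : 2 ≤ K) (α : Fin K → Fin K → Fin 2 → ℝ)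
    (rb : Fin K → Fin 2 → ℝ) (k : Fin K) : ℝ :=
  crossMax hK k (fun j l => α j k l + rb j l)

/-- UL noise floor of user `u` of cell `k`. -/
noncomputable def dG (hK : 2 ≤ K) (α : Fin K → Fin K → Fin 2 → ℝ)
    (π : Fin K → Equiv.Perm (Fin 2)) (rb : Fin K → Fin 2 → ℝ)
    (k : Fin K) (u : Fin 2) : ℝ :=
  if u = π k 0 then max 0 (dX hK α rb k)
  else max (max 0 (α k k (π k 0) + rb k (π k 0))) (dX hK α rb k)

lemma dG_nonneg (hK : 2 ≤ K) (α : Fin K → Fin K → Fin 2 → ℝ)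
    (π : Fin K → Equiv.Perm (Fin 2)) (rb : Fin K → Fin 2 → ℝ)
    (k : Fin K) (u : Fin 2) : 0 ≤ dG hK α π rb k u := by
  unfold dG; split
  · exact le_max_left 0 _
  · exact le_trans (le_max_left 0 _) (le_max_left _ _)

lemma dX_le_dG (hK : 2 ≤ K) (α : Fin K → Fin K → Fin 2 → ℝ)
    (π : Fin K → Equiv.Perm (Fin 2)) (rb : Fin K → Fin 2 → ℝ)
    (k : Fin K) (u : Fin 2) : dX hK α rb k ≤ dG hK α π rb k u := by
  unfold dG; split
  · exact le_max_right 0 _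
  · exact le_max_right _ _

lemma dG_apply0 (hK : 2 ≤ K) (α : Fin K → Fin K → Fin 2 → ℝ)
    (π : Fin K → Equiv.Perm (Fin 2)) (rb : Fin K → Fin 2 → ℝ) (k : Fin K) :
    dG hK α π rb k (π k 0) = max 0 (dX hK α rb k) := if_pos rfl

lemma dG_apply1 (hK : 2 ≤ K) (α : Fin K → Fin K → Fin 2 → ℝ)
    (π : Fin K → Equiv.Perm (Fin 2)) (rb : Fin K → Fin 2 → ℝ) (k : Fin K) :
    dG hK α π rb k (π k 1) =
      max (max 0 (α k k (π k 0) + rb k (π k 0))) (dX hK α rb k) :=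
  if_neg (fun h => absurd ((π k).injective h) (by decide))

lemma dG_le_self (hK : 2 ≤ K) (α : Fin K → Fin K → Fin 2 → ℝ)
    (π : Fin K → Equiv.Perm (Fin 2)) (rb : Fin K → Fin 2 → ℝ) (k : Fin K) :
    α k k (π k 0) + rb k (π k 0) ≤ dG hK α π rb k (π k 1) := by
  rw [dG_apply1]
  exact le_trans (le_max_right 0 _) (le_max_left _ _)

/-- The key cross-interference bound in the dual downlink. -/
lemma Ybound (hK : 2 ≤ K) (α : Fin K → Fin K → Fin 2 → ℝ)
    (π : Fin K → Equiv.Perm (Fin 2)) (rb : Fin K → Fin 2 → ℝ)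
    (hrb : ∀ k l, rb k l ≤ 0) (k : Fin K) (u : Fin 2) :
    pplus (crossMax hK k (fun j l => α k j u + -(dG hK α π rb j l))) ≤ -(rb k u) := by
  have h0 : (0:ℝ) ≤ -(rb k u) := by linarith [hrb k u]
  refine max_le (crossMax_le hK ?_) h0
  intro j hj l
  have h1 : α k j u + rb k u ≤ dX hK α rb j :=
    le_crossMax hK (f := fun i l' => α i j l' + rb i l') u (Ne.symm hj)
  have h2 : dX hK α rb j ≤ dG hK α π rb j l := dX_le_dG hK α π rb j l
  linarith

end Aux

/-- **Uplink-to-downlink inclusion.**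
Every GDoF tuple achievable by TIN in the IMAC with some decoding order and
nonpositive power allocation is also achievable by TIN in the IBC with a
(possibly different) decoding order and nonpositive power allocation;
consequently `P^IMAC⋆ ⊆ P^IBC⋆`. -/
theorem ul_to_dl_inclusion {K : ℕ} (hK : 2 ≤ K) (α : Fin K → Fin K → Fin 2 → ℝ)
    (hα : ∀ k i l, 0 ≤ α k i l) (hord : ∀ k, α k k 0 ≤ α k k 1) :
    (∀ (π : Fin K → Equiv.Perm (Fin 2)) (rb : Fin K → Fin 2 → ℝ)
       (d : Fin K → Fin 2 → ℝ),
      (∀ k l, rb k l ≤ 0) → d ∈ IMACr hK α π rb →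
        ∃ (π' : Fin K → Equiv.Perm (Fin 2)) (r' : Fin K → Fin 2 → ℝ),
          (∀ k l, r' k l ≤ 0) ∧ d ∈ IBCr hK α π' r') ∧
    IMACstar hK α ⊆ IBCstar hK α := by
  have main : ∀ (π : Fin K → Equiv.Perm (Fin 2)) (rb : Fin K → Fin 2 → ℝ)
      (d : Fin K → Fin 2 → ℝ),
      (∀ k l, rb k l ≤ 0) → d ∈ IMACr hK α π rb →
        ∃ (π' : Fin K → Equiv.Perm (Fin 2)) (r' : Fin K → Fin 2 → ℝ),
          (∀ k l, r' k l ≤ 0) ∧ d ∈ IBCr hK α π' r' := by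
    intro π rb d hrb hd
    classical
    set r' : Fin K → Fin 2 → ℝ := fun k u => -(dG hK α π rb k u) with hr'
    set σ : Fin K → Equiv.Perm (Fin 2) := fun k =>
      if α k k (π k 1) < α k k (π k 0) + rb k (π k 0) - rb k (π k 1)
      then π k * Equiv.swap 0 1 else π k with hσ
    refine ⟨σ, r', fun k u => neg_nonpos.mpr (dG_nonneg hK α π rb k u), ?_⟩
    intro k
    obtain ⟨⟨h00, h01⟩, h10, h11⟩ := hd k
    have hY0 := Ybound hK α π rb hrb k (π k 0)
    have hY1 := Ybound hK α π rb hrb k (π k 1)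
    rw [imacBound1] at h01
    rw [imacBound2] at h11
    have hdx : crossMax hK k (fun j l => α j k l + rb j l) = dX hK α rb k := rfl
    rw [hdx] at h01 h11
    have hppx : pplus (dX hK α rb k) = max 0 (dX hK α rb k) := max_comm _ _
    have hppG : pplus (max (α k k (π k 0) + rb k (π k 0)) (dX hK α rb k)) =
        max (max 0 (α k k (π k 0) + rb k (π k 0))) (dX hK α rb k) := by
      unfold pplus
      rw [max_comm _ (0:ℝ), ← max_assoc]
    rw [hppx] at h01
    rw [hppG] at h11
    have hG1 : α k k (π k 0) + rb k (π k 0) ≤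
        max (max 0 (α k k (π k 0) + rb k (π k 0))) (dX hK α rb k) :=
      le_trans (le_max_right 0 _) (le_max_left _ _)
    by_cases hC : α k k (π k 1) < α k k (π k 0) + rb k (π k 0) - rb k (π k 1)
    · have e0 : σ k 0 = π k 1 := by
        simp only [hσ]
        rw [if_pos hC, Equiv.Perm.mul_apply, Equiv.swap_apply_left]
      have e1 : σ k 1 = π k 0 := by
        simp only [hσ]
        rw [if_pos hC, Equiv.Perm.mul_apply, Equiv.swap_apply_right]
      have hd1 : d k (π k 1) ≤ 0 := by
        refine h11.trans (le_of_eq (max_eq_left ?_))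
        have hb1 := hrb k (π k 1)
        linarith
      refine ⟨⟨?_, ?_⟩, ?_, ?_⟩
      · rw [e0]; exact h10
      · rw [e0, ibcBound1]
        exact hd1.trans (le_max_left 0 _)
      · rw [e1]; exact h00
      · rw [ibcBound2, e1]
        simp only [hr']
        rw [dG_apply0]
        refine h01.trans (max_le_max le_rfl ?_)
        have hy : crossMax hK k (fun j l => α k j (π k 0) + -(dG hK α π rb j l)) ≤
            pplus (crossMax hK k (fun j l => α k j (π k 0) + -(dG hK α π rb j l))) :=
          le_max_left _ _
        linarith
    · have hC' : α k k (π k 0) + rb k (π k 0) - rb k (π k 1) ≤ α k k (π k 1) :=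
        not_lt.mp hC
      have e0 : σ k 0 = π k 0 := by
        simp only [hσ]; rw [if_neg hC]
      have e1 : σ k 1 = π k 1 := by
        simp only [hσ]; rw [if_neg hC]
      refine ⟨⟨?_, ?_⟩, ?_, ?_⟩
      · rw [e0]; exact h00
      · rw [e0, ibcBound1, e0, e1]
        simp only [hr']
        rw [dG_apply0, dG_apply1]
        refine h01.trans (max_le_max le_rfl (le_min ?_ ?_))
        · have hy : crossMax hK k (fun j l => α k j (π k 0) + -(dG hK α π rb j l)) ≤
              -(rb k (π k 0)) := le_trans (le_max_left _ _) hY0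
          have hp : pplus (max (α k k (π k 0) +
              -(max (max 0 (α k k (π k 0) + rb k (π k 0))) (dX hK α rb k)))
              (crossMax hK k (fun j l => α k j (π k 0) + -(dG hK α π rb j l)))) ≤
              -(rb k (π k 0)) := by
            refine max_le (max_le (by linarith) hy) (by linarith [hrb k (π k 0)])
          linarith
        · have hy : crossMax hK k (fun j l => α k j (π k 1) + -(dG hK α π rb j l)) ≤
              -(rb k (π k 1)) := le_trans (le_max_left _ _) hY1
          have hb1 := hrb k (π k 1)
          have hp : pplus (max (α k k (π k 1) +
              -(max (max 0 (α k k (π k 0) + rb k (π k 0))) (dX hK α rb k)))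
              (crossMax hK k (fun j l => α k j (π k 1) + -(dG hK α π rb j l)))) ≤
              α k k (π k 1) - (α k k (π k 0) + rb k (π k 0)) := by
            refine max_le (max_le (by linarith) (by linarith)) (by linarith)
          linarith
      · rw [e1]; exact h10
      · rw [ibcBound2, e1]
        simp only [hr']
        rw [dG_apply1]
        refine h11.trans (max_le_max le_rfl ?_)
        have hy : crossMax hK k (fun j l => α k j (π k 1) + -(dG hK α π rb j l)) ≤
            pplus (crossMax hK k (fun j l => α k j (π k 1) + -(dG hK α π rb j l))) :=
          le_max_left _ _
        linarith
  refine ⟨main, ?_⟩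
  rintro d ⟨π, rb, h1, h2⟩
  obtain ⟨π', r', h3, h4⟩ := main π rb d h1 h2
  exact ⟨π', r', h3, h4⟩
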